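/- Fix t ≠ 0 and r > 0. Let s(r) ≥ 0 be the unique nonnegative real with cosh(s(r)) = cosh r · cosh t, and let β(r) = arcsin( sinh r / sinh(s(r)) ). Then sinh(s(r))² · (dβ/dr)² + (ds/dr)² = 1, where dβ/dr and ds/dr denote the derivatives of the functions r ↦ β(r) and r ↦ s(r) at r. -/

import Mathlib

/-!
Differentiating `cosh s = cosh r cosh t` and `sin β = sinh r / sinh s` gives
`s' = sinh r cosh t / sinh s` and `β' = |sinh t| / sinh² s`, so that
`sinh² s β'² + s'² = (sinh² t + sinh² r cosh² t) / sinh² s`, which is `1` because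
`sinh² s = cosh² r cosh² t - 1`.
-/

/-- The hypotenuse `s(t, r)`: the unique nonnegative real with
`cosh (polarS t r) = cosh r * cosh t`. -/
noncomputable def polarS (t r : ℝ) : ℝ :=
  Real.arsinh (Real.sqrt ((Real.cosh r * Real.cosh t) ^ 2 - 1))

theorem polarS_nonneg (t r : ℝ) : 0 ≤ polarS t r :=
  Real.arsinh_nonneg_iff.mpr (Real.sqrt_nonneg _)

theorem cosh_polarS (t r : ℝ) : Real.cosh (polarS t r) = Real.cosh r * Real.cosh t := by
  have h1 : (1 : ℝ) ≤ Real.cosh r * Real.cosh t := by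
    nlinarith [Real.one_le_cosh r, Real.one_le_cosh t]
  have h2 : (0 : ℝ) ≤ (Real.cosh r * Real.cosh t) ^ 2 - 1 := by nlinarith
  rw [polarS, Real.cosh_arsinh, Real.sq_sqrt h2]
  rw [show (1 : ℝ) + ((Real.cosh r * Real.cosh t) ^ 2 - 1)
      = (Real.cosh r * Real.cosh t) ^ 2 by ring]
  exact Real.sqrt_sq (by linarith)

noncomputable def polarBeta (t r : ℝ) : ℝ :=
  Real.arcsin (Real.sinh r / Real.sinh (polarS t r))

open Real

theorem hasDerivAt_of_hasDerivAt_sinh_comp {f : ℝ → ℝ} {d a : ℝ}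
    (hf : HasDerivAt (fun x => sinh (f x)) d a) :
    HasDerivAt f (d / cosh (f a)) a := by
  have h := hf.arsinh
  simp only [arsinh_sinh, ← cosh_arsinh, smul_eq_mul] at h
  rwa [div_eq_inv_mul]

theorem sinh_polarS_sq (t r : ℝ) : sinh (polarS t r) ^ 2 = (cosh r * cosh t) ^ 2 - 1 := by
  rw [sinh_sq, cosh_polarS]

section polar

variable {t : ℝ}

theorem sinh_polarS_pos (ht : t ≠ 0) (r : ℝ) : 0 < sinh (polarS t r) := by
  have hne : polarS t r ≠ 0 := one_lt_cosh.mp <| by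
    rw [cosh_polarS]
    exact one_lt_mul_of_le_of_lt (one_le_cosh r) (one_lt_cosh.mpr ht)
  exact sinh_pos_iff.mpr ((polarS_nonneg t r).lt_of_ne' hne)

theorem hasDerivAt_sinh_polarS (ht : t ≠ 0) (r : ℝ) :
    HasDerivAt (fun x => sinh (polarS t x))
      (sinh r * cosh r * cosh t ^ 2 / sinh (polarS t r)) r := by
  have hsinh : ∀ x, sinh (polarS t x) = √((cosh x * cosh t) ^ 2 - 1) := fun x => sinh_arsinh _
  have hg : HasDerivAt (fun x => (cosh x * cosh t) ^ 2 - 1)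
      (2 * (sinh r * cosh r * cosh t ^ 2)) r := by
    refine ((((hasDerivAt_cosh r).mul_const (cosh t)).pow 2).sub_const 1).congr_deriv ?_
    push_cast
    ring
  have hpos : (cosh r * cosh t) ^ 2 - 1 ≠ 0 := by
    rw [← sinh_polarS_sq]
    exact (pow_pos (sinh_polarS_pos ht r) 2).ne'
  simp only [hsinh]
  refine (hg.sqrt hpos).congr_deriv ?_
  field_simp

theorem hasDerivAt_polarS (ht : t ≠ 0) (r : ℝ) :
    HasDerivAt (polarS t) (sinh r * cosh t / sinh (polarS t r)) r := by
  refine (hasDerivAt_of_hasDerivAt_sinh_comp (hasDerivAt_sinh_polarS ht r)).congr_deriv ?_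
  rw [cosh_polarS]
  field_simp [(cosh_pos r).ne', (cosh_pos t).ne']

theorem hasDerivAt_sinh_div_sinh_polarS (ht : t ≠ 0) (r : ℝ) :
    HasDerivAt (fun x => sinh x / sinh (polarS t x))
      (cosh r * sinh t ^ 2 / sinh (polarS t r) ^ 3) r := by
  have hS := sinh_polarS_pos ht r
  refine ((hasDerivAt_sinh r).div (hasDerivAt_sinh_polarS ht r) hS.ne').congr_deriv ?_
  field_simp
  linear_combination sinh_polarS_sq t r - cosh t ^ 2 * sinh_sq r - sinh_sq t

theorem one_sub_sq_sinh_div_sinh_polarS (ht : t ≠ 0) (r : ℝ) :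
    1 - (sinh r / sinh (polarS t r)) ^ 2 = (cosh r * sinh t / sinh (polarS t r)) ^ 2 := by
  have hS := sinh_polarS_pos ht r
  field_simp
  linear_combination sinh_polarS_sq t r - sinh_sq r - cosh r ^ 2 * sinh_sq t

theorem hasDerivAt_polarBeta (ht : t ≠ 0) (r : ℝ) :
    HasDerivAt (polarBeta t) (|sinh t| / sinh (polarS t r) ^ 2) r := by
  have hS := sinh_polarS_pos ht r
  have hsinh_t := sinh_ne_zero.mpr ht
  have hpos : 0 < 1 - (sinh r / sinh (polarS t r)) ^ 2 := by
    rw [one_sub_sq_sinh_div_sinh_polarS ht r]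
    positivity
  obtain ⟨h₁, h₂⟩ := abs_lt.mp ((sq_lt_one_iff_abs_lt_one _).mp (sub_pos.mp hpos))
  refine ((hasDerivAt_arcsin h₁.ne' h₂.ne).comp r
    (hasDerivAt_sinh_div_sinh_polarS ht r)).congr_deriv ?_
  rw [one_sub_sq_sinh_div_sinh_polarS ht r, sqrt_sq_eq_abs, abs_div, abs_mul,
    abs_of_pos (cosh_pos r), abs_of_pos hS]
  field_simp
  rw [sq_abs]

end polar

theorem fermi_polar_r_component_general (t r : ℝ) (ht : t ≠ 0) :
    Real.sinh (polarS t r) ^ 2 * (deriv (fun r' : ℝ => polarBeta t r') r) ^ 2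
        + (deriv (fun r' : ℝ => polarS t r') r) ^ 2
      = 1 := by
  have hS := sinh_polarS_pos ht r
  rw [(hasDerivAt_polarBeta ht r).deriv, (hasDerivAt_polarS ht r).deriv]
  field_simp
  rw [sq_abs]
  linear_combination sinh_sq t + cosh t ^ 2 * sinh_sq r - sinh_polarS_sq t r

/-- Fix `t ≠ 0` and `r > 0`. With `s(r') = polarS t r'` and
`β(r') = arcsin (sinh r' / sinh (s(r')))`, one has
`sinh (s r)² * (dβ/dr)² + (ds/dr)² = 1`. -/
theorem fermi_polar_r_component (t r : ℝ) (ht : t ≠ 0) (hr : 0 < r) :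
    Real.sinh (polarS t r) ^ 2 * (deriv (fun r' : ℝ => polarBeta t r') r) ^ 2
        + (deriv (fun r' : ℝ => polarS t r') r) ^ 2
      = 1 :=
  fermi_polar_r_component_general t r ht
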